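/- Fix x ∈ ℂ. There exists a constant C > 0 such that for every θ ∈ [−π/8, π/8] and every r ≥ 1, setting y := r e^{iθ}, W := 4^{−1/3}·e^{iπ/6} + 2^{−2/3}·e^{−i(π+4θ)/6} and U := 4^{−1/3}·e^{5iπ/6} − 2^{−2/3}·e^{i(π−4θ)/6}, one has | ∫₀^∞ exp( r^{4/3}·f_θ(W + ρ e^{−iθ/3}) − x y^{2/3} (W + ρ e^{−iθ/3})² ) dρ | ≤ C·exp(−1.38·r^{4/3}) and | ∫₀^∞ exp( r^{4/3}·f_θ(U − ρ e^{−iθ/3}) − x y^{2/3} (U − ρ e^{−iθ/3})² ) dρ | ≤ C·exp(−1.38·r^{4/3}). -/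

import Mathlib

open Real MeasureTheory

/-- The phase function `f_θ(t) = e^{4iθ/3}·(i t − t⁴)`. -/
noncomputable def f (θ : ℝ) (t : ℂ) : ℂ :=
  Complex.exp (Complex.I * (4 * (θ : ℂ) / 3)) * (Complex.I * t - t ^ 4)

/-- `W(θ) = t₁ + 2^{−2/3}·e^{−i(π+4θ)/6}`. -/
noncomputable def W (θ : ℝ) : ℂ :=
  (4 : ℂ) ^ (-(1 : ℂ) / 3) * Complex.exp (Complex.I * ((π : ℂ) / 6)) +
    (2 : ℂ) ^ (-(2 : ℂ) / 3) * Complex.exp (-Complex.I * (((π : ℂ) + 4 * (θ : ℂ)) / 6))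

/-- `U(θ) = t₂ − 2^{−2/3}·e^{i(π−4θ)/6}`. -/
noncomputable def U (θ : ℝ) : ℂ :=
  (4 : ℂ) ^ (-(1 : ℂ) / 3) * Complex.exp (Complex.I * (5 * (π : ℂ) / 6)) -
    (2 : ℂ) ^ (-(2 : ℂ) / 3) * Complex.exp (Complex.I * (((π : ℂ) - 4 * (θ : ℂ)) / 6))

/-!
Both tails lie on the line `ℝ·e^{-iθ/3}`: with `c = 2^{1/3}`, `W θ = e^{-iθ/3} c cos(π/6 + θ/3)` and
`U θ = -e^{-iθ/3} c cos(π/6 - θ/3)`. Writing a point of either tail as `±e^{-iθ/3} v` with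
`v = c cos φ + ρ`, where `φ = π/6 ± θ/3 ∈ [π/8, 5π/24]` satisfies `∓sin θ = cos 3φ`, one gets
`Re f_θ = v cos 3φ - v⁴ ≤ -1.3804 - ρ - ρ⁴`. The `x`-term is at most `‖x‖ r^{2/3} v²`, which the
margin `0.0004 r^{4/3}` and the term `-r^{4/3} ρ⁴` absorb up to the constant `exp (4700 ‖x‖²)`;
the factor `e^{-ρ}` that is left over integrates to `1`.
-/

open Set

noncomputable def cbrtTwo : ℝ := 2 ^ ((1 : ℝ) / 3)

lemma cbrtTwo_pow_three : cbrtTwo ^ 3 = 2 := by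
  rw [cbrtTwo, ← Real.rpow_natCast, ← Real.rpow_mul zero_le_two]
  norm_num

lemma cbrtTwo_mem_Icc : cbrtTwo ∈ Icc 1.2599 1.26 := by
  have h0 : 0 ≤ cbrtTwo := by unfold cbrtTwo; positivity
  have h3 := cbrtTwo_pow_three
  constructor <;> nlinarith [sq_nonneg (cbrtTwo - 1.26), sq_nonneg (cbrtTwo - 1.2599)]

lemma cos_sq_five_pi_div_twentyfour :
    cos (5 * π / 24) ^ 2 = 1 / 2 + (√6 - √2) / 8 := by
  have h5 : cos (5 * π / 12) = (√6 - √2) / 4 := by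
    rw [show 5 * π / 12 = π / 4 + π / 6 by ring, cos_add, cos_pi_div_four, cos_pi_div_six,
      sin_pi_div_four, sin_pi_div_six, show (6 : ℝ) = 2 * 3 by norm_num,
      Real.sqrt_mul zero_le_two]
    ring
  rw [cos_sq, show 2 * (5 * π / 24) = 5 * π / 12 by ring, h5]
  ring

lemma cos_sq_pi_div_eight : cos (π / 8) ^ 2 = 1 / 2 + √2 / 4 := by
  rw [cos_sq, show 2 * (π / 8) = π / 4 by ring, cos_pi_div_four]
  ring

lemma cos_nonneg_and_sq_mem_Icc {φ : ℝ} (hφ : φ ∈ Icc (π / 8) (5 * π / 24)) :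
    0 ≤ cos φ ∧ cos φ ^ 2 ∈ Icc 0.629409 0.853554 := by
  obtain ⟨hφ₁, hφ₂⟩ := hφ
  have hπ := pi_pos
  have hφ_nonneg : 0 ≤ cos φ := cos_nonneg_of_mem_Icc ⟨by linarith, by linarith⟩
  have h_lo : cos (5 * π / 24) ≤ cos φ :=
    cos_le_cos_of_nonneg_of_le_pi (by linarith) (by linarith) hφ₂
  have h_hi : cos φ ≤ cos (π / 8) :=
    cos_le_cos_of_nonneg_of_le_pi (by linarith) (by linarith) hφ₁
  have h_lo_nonneg : 0 ≤ cos (5 * π / 24) := cos_nonneg_of_mem_Icc ⟨by linarith, by linarith⟩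
  have hs2 : √2 ≤ 1.414214 := by nlinarith [sq_sqrt (zero_le_two : (0 : ℝ) ≤ 2), sqrt_nonneg 2]
  have hs6 : 2.449489 ≤ √6 := by nlinarith [sq_sqrt (by norm_num : (0 : ℝ) ≤ 6), sqrt_nonneg 6]
  refine ⟨hφ_nonneg, ?_, ?_⟩
  · calc (0.629409 : ℝ) ≤ cos (5 * π / 24) ^ 2 := by
          rw [cos_sq_five_pi_div_twentyfour]; linarith
      _ ≤ cos φ ^ 2 := pow_le_pow_left₀ h_lo_nonneg h_lo 2
  · calc cos φ ^ 2 ≤ cos (π / 8) ^ 2 := pow_le_pow_left₀ hφ_nonneg h_hi 2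
      _ ≤ 0.853554 := by rw [cos_sq_pi_div_eight]; linarith

/-- At `ρ = 0`, using `c⁴ = 2c`, the left side equals `-c w² (3 - 2w²)`, and its slope in `ρ` is
below `4w³ - 3w - 4(cw)³ < -1`. -/
lemma quartic_phase_le {c w ρ : ℝ} (hc : c ^ 3 = 2) (hc' : 1.2599 ≤ c) (hw : 0 ≤ w)
    (hw2 : w ^ 2 ∈ Icc 0.629409 0.853554) (hρ : 0 ≤ ρ) :
    (c * w + ρ) * (4 * w ^ 3 - 3 * w) - (c * w + ρ) ^ 4 ≤ -1.3804 - ρ - ρ ^ 4 := by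
  obtain ⟨hw2₁, hw2₂⟩ := hw2
  have hw₁ : 0.7933 ≤ w := by nlinarith
  have hw₂ : w ≤ 0.924 := by nlinarith
  have hcw : 0.999 ≤ c * w := by nlinarith
  have h_at_zero :
      (c * w) * (4 * w ^ 3 - 3 * w) - (c * w) ^ 4 = -(c * (w ^ 2 * (3 - 2 * w ^ 2))) := by
    linear_combination (-w ^ 4 * c) * hc
  have h_quad : 1.0959 ≤ w ^ 2 * (3 - 2 * w ^ 2) := by
    nlinarith [mul_nonneg (sub_nonneg.2 hw2₁) (sub_nonneg.2 hw2₂)]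
  have h_cos3 : 4 * w ^ 3 - 3 * w ≤ 0.4 := by nlinarith
  have h_cube : 0.997 ≤ (c * w) ^ 3 := by nlinarith
  have h_expand : (c * w) ^ 4 + 4 * (c * w) ^ 3 * ρ + ρ ^ 4 ≤ (c * w + ρ) ^ 4 := by
    nlinarith [mul_nonneg (sq_nonneg (c * w)) (sq_nonneg ρ),
      mul_nonneg (mul_nonneg (by linarith : 0 ≤ c * w) hρ) (mul_nonneg hρ hρ)]
  nlinarith [mul_le_mul_of_nonneg_right h_cos3 hρ, mul_le_mul_of_nonneg_right h_cube hρ]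

lemma tail_phase_le {φ ρ : ℝ} (hφ : φ ∈ Icc (π / 8) (5 * π / 24)) (hρ : 0 ≤ ρ) :
    (cbrtTwo * cos φ + ρ) * cos (3 * φ) - (cbrtTwo * cos φ + ρ) ^ 4 ≤ -1.3804 - ρ - ρ ^ 4 := by
  obtain ⟨hw, hw2⟩ := cos_nonneg_and_sq_mem_Icc hφ
  rw [cos_three_mul]
  exact quartic_phase_le cbrtTwo_pow_three cbrtTwo_mem_Icc.1 hw hw2 hρ

lemma quartic_decay_absorbs_quadratic {Q ρ v n : ℝ} (hQ : 1 ≤ Q) (hρ : 0 ≤ ρ) (hn : 0 ≤ n)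
    (hv : v ≤ 1.17 + ρ) (hv₀ : 0 ≤ v) :
    Q ^ 2 * (-1.3804 - ρ - ρ ^ 4) + n * Q * v ^ 2 ≤ 4700 * n ^ 2 - 1.38 * Q ^ 2 - ρ := by
  have hv2 : v ^ 2 ≤ 2.74 + 2 * ρ ^ 2 := by nlinarith [sq_nonneg (ρ - 1.17)]
  have hnQ : n * Q * v ^ 2 ≤ n * Q * (2.74 + 2 * ρ ^ 2) :=
    mul_le_mul_of_nonneg_left hv2 (by positivity)
  have hρQ : ρ ≤ Q ^ 2 * ρ := le_mul_of_one_le_left hρ (by nlinarith)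
  nlinarith [sq_nonneg (Q * ρ ^ 2 - n), sq_nonneg (0.02 * Q - 68.5 * n)]

lemma two_mul_two_cpow_neg_two_thirds : 2 * (2 : ℂ) ^ (-(2 : ℂ) / 3) = (cbrtTwo : ℂ) := by
  rw [cbrtTwo, Complex.ofReal_cpow zero_le_two, Complex.ofReal_ofNat,
    show (((1 : ℝ) / 3 : ℝ) : ℂ) = 1 + -(2 : ℂ) / 3 by push_cast; ring,
    Complex.cpow_add _ _ two_ne_zero, Complex.cpow_one]

lemma four_cpow_neg_one_third : (4 : ℂ) ^ (-(1 : ℂ) / 3) = (2 : ℂ) ^ (-(2 : ℂ) / 3) := by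
  rw [show (4 : ℂ) = 2 ^ (2 : ℂ) by norm_num, ← Complex.cpow_mul]
  · ring_nf
  all_goals norm_num [Complex.log_im, Complex.arg_ofReal_of_nonneg]; linarith [pi_pos]

lemma two_cos_eq (z : ℝ) :
    2 * ((cos z : ℝ) : ℂ) = Complex.exp (Complex.I * z) + Complex.exp (Complex.I * -z) := by
  rw [Complex.ofReal_cos, Complex.cos]
  ring_nf

lemma W_eq (θ : ℝ) :
    W θ = Complex.exp (-Complex.I * (θ / 3)) * ((cbrtTwo * cos (π / 6 + θ / 3) : ℝ) : ℂ) := by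
  set z : ℝ := π / 6 + θ / 3
  have h₁ : Complex.exp (-Complex.I * (θ / 3)) * Complex.exp (Complex.I * z) =
      Complex.exp (Complex.I * (π / 6)) := by
    rw [← Complex.exp_add]; push_cast [z]; ring_nf
  have h₂ : Complex.exp (-Complex.I * (θ / 3)) * Complex.exp (Complex.I * -z) =
      Complex.exp (-Complex.I * ((π + 4 * θ) / 6)) := by
    rw [← Complex.exp_add]; push_cast [z]; ring_nf
  rw [W, four_cpow_neg_one_third, Complex.ofReal_mul, ← two_mul_two_cpow_neg_two_thirds,
    ← h₁, ← h₂]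
  linear_combination (-(Complex.exp (-Complex.I * (θ / 3)) * 2 ^ (-(2 : ℂ) / 3))) * two_cos_eq z

lemma U_eq (θ : ℝ) :
    U θ = -Complex.exp (-Complex.I * (θ / 3)) * ((cbrtTwo * cos (π / 6 - θ / 3) : ℝ) : ℂ) := by
  set z : ℝ := π / 6 - θ / 3
  have h₁ : Complex.exp (-Complex.I * (θ / 3)) * Complex.exp (Complex.I * z) =
      Complex.exp (Complex.I * ((π - 4 * θ) / 6)) := by
    rw [← Complex.exp_add]; push_cast [z]; ring_nf
  have h₂ : Complex.exp (-Complex.I * (θ / 3)) * Complex.exp (Complex.I * -z) =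
      -Complex.exp (Complex.I * (5 * π / 6)) := by
    rw [← Complex.exp_add, show Complex.I * (5 * π / 6) =
      -Complex.I * (θ / 3) + Complex.I * -z + π * Complex.I by push_cast [z]; ring,
      Complex.exp_add _ (π * Complex.I), Complex.exp_pi_mul_I]
    ring
  rw [U, four_cpow_neg_one_third, Complex.ofReal_mul, ← two_mul_two_cpow_neg_two_thirds,
    ← neg_neg (Complex.exp (Complex.I * (5 * π / 6))), ← h₁, ← h₂]
  linear_combination (Complex.exp (-Complex.I * (θ / 3)) * 2 ^ (-(2 : ℂ) / 3)) * two_cos_eq z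

lemma re_f_ofReal_mul_exp_mul {θ ε : ℝ} (v : ℝ) (hε : ε ^ 4 = 1) :
    (f θ (ε * Complex.exp (-Complex.I * (θ / 3)) * v)).re = -(ε * sin θ) * v - v ^ 4 := by
  have h_rot : f θ (ε * Complex.exp (-Complex.I * (θ / 3)) * v) =
      ε * v * (Complex.I * Complex.exp (θ * Complex.I)) - (v : ℂ) ^ 4 := by
    have hε' : (ε : ℂ) ^ 4 = 1 := by exact_mod_cast hε
    have h₁ : Complex.exp (Complex.I * (4 * θ / 3)) * Complex.exp (-Complex.I * (θ / 3)) =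
        Complex.exp (θ * Complex.I) := by rw [← Complex.exp_add]; ring_nf
    have h₂ :
        Complex.exp (Complex.I * (4 * θ / 3)) * Complex.exp (-Complex.I * (θ / 3)) ^ 4 = 1 := by
      rw [← Complex.exp_nat_mul, ← Complex.exp_add]; ring_nf; exact Complex.exp_zero
    rw [f]
    linear_combination (ε * v * Complex.I) * h₁ - (v : ℂ) ^ 4 * h₂
      - ((v : ℂ) ^ 4 * Complex.exp (Complex.I * (4 * θ / 3)) *
        Complex.exp (-Complex.I * (θ / 3)) ^ 4) * hε'
  rw [h_rot, Complex.exp_mul_I]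
  simp only [← Complex.ofReal_cos, ← Complex.ofReal_sin, ← Complex.ofReal_pow, Complex.sub_re,
    Complex.mul_re, Complex.ofReal_re, Complex.ofReal_im, mul_zero, sub_zero, Complex.I_re,
    Complex.add_re, Complex.I_im, mul_one, sub_self, add_zero, zero_mul, Complex.add_im,
    Complex.mul_im, zero_add, one_mul, zero_sub, mul_neg, neg_mul, sub_left_inj, neg_inj]
  ring

lemma norm_integral_Ioi_le_of_norm_le_mul_exp_neg {E : Type*} [NormedAddCommGroup E]
    [NormedSpace ℝ E] {g : ℝ → E} {A : ℝ} (h : ∀ ρ ∈ Ioi 0, ‖g ρ‖ ≤ A * exp (-ρ)) :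
    ‖∫ ρ in Ioi 0, g ρ‖ ≤ A :=
  calc ‖∫ ρ in Ioi 0, g ρ‖ ≤ ∫ ρ in Ioi 0, A * exp (-ρ) :=
        norm_integral_le_of_norm_le ((integrableOn_exp_neg_Ioi 0).const_mul A)
          (ae_restrict_of_forall_mem measurableSet_Ioi h)
    _ = A := by rw [integral_const_mul, integral_exp_neg_Ioi_zero, mul_one]

lemma re_tail_exponent_le (x : ℂ) {θ r φ ε ρ : ℝ} (hr : 1 ≤ r)
    (hφ : φ ∈ Icc (π / 8) (5 * π / 24)) (hε : ε = 1 ∨ ε = -1) (hθφ : ε * sin θ = -cos (3 * φ))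
    (hρ : 0 ≤ ρ) {t : ℂ}
    (ht : t = ε * Complex.exp (-Complex.I * (θ / 3)) * ((cbrtTwo * cos φ + ρ : ℝ) : ℂ)) :
    ((r : ℂ) ^ ((4 : ℂ) / 3) * f θ t
      - x * ((r : ℂ) * Complex.exp (Complex.I * θ)) ^ ((2 : ℂ) / 3) * t ^ 2).re ≤
      4700 * ‖x‖ ^ 2 - 1.38 * r ^ ((4 : ℝ) / 3) - ρ := by
  set v := cbrtTwo * cos φ + ρ
  set Q := r ^ ((2 : ℝ) / 3)
  have hr₀ : 0 ≤ r := by linarith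
  have hQ : 1 ≤ Q := Real.one_le_rpow hr (by norm_num)
  have hR : r ^ ((4 : ℝ) / 3) = Q ^ 2 := by
    rw [← Real.rpow_natCast, ← Real.rpow_mul hr₀]; norm_num
  have hv : v ∈ Icc 0 (1.17 + ρ) := by
    obtain ⟨hw, hw2⟩ := cos_nonneg_and_sq_mem_Icc hφ
    have hc := cbrtTwo_mem_Icc
    constructor <;> nlinarith [hc.1, hc.2, hw2.2]
  have h_phase : (r ^ ((4 : ℂ) / 3) * f θ t).re = Q ^ 2 * (v * cos (3 * φ) - v ^ 4) := by
    have hε4 : ε ^ 4 = 1 := by rcases hε with rfl | rfl <;> norm_num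
    rw [ht, ← hR, show (r : ℂ) ^ ((4 : ℂ) / 3) = ((r ^ ((4 : ℝ) / 3) : ℝ) : ℂ) by
      rw [Complex.ofReal_cpow hr₀]; norm_num, Complex.re_ofReal_mul,
      re_f_ofReal_mul_exp_mul v hε4, hθφ]
    ring
  have h_quad : ‖x * ((r : ℂ) * Complex.exp (Complex.I * θ)) ^ ((2 : ℂ) / 3) * t ^ 2‖ =
      ‖x‖ * Q * v ^ 2 := by
    have hε₁ : |ε| = 1 := by rcases hε with rfl | rfl <;> norm_num
    rw [show ((2 : ℂ) / 3) = ((2 / 3 : ℝ) : ℂ) by norm_num, norm_mul, norm_mul, norm_pow,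
      Complex.norm_cpow_real, norm_mul, mul_comm Complex.I, Complex.norm_exp_ofReal_mul_I, ht,
      norm_mul, norm_mul, Complex.norm_exp]
    simp [hε₁, abs_of_nonneg hr₀, abs_of_nonneg hv.1, Q]
  rw [Complex.sub_re, h_phase, hR]
  have h_re := neg_le_of_abs_le (Complex.abs_re_le_norm
    (x * ((r : ℂ) * Complex.exp (Complex.I * θ)) ^ ((2 : ℂ) / 3) * t ^ 2))
  have h_decay := mul_le_mul_of_nonneg_left (tail_phase_le hφ hρ) (sq_nonneg Q)
  have h_absorb := quartic_decay_absorbs_quadratic hQ hρ (norm_nonneg x) hv.2 hv.1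
  linarith

lemma norm_tail_integral_le (x : ℂ) {θ r φ ε : ℝ} (hr : 1 ≤ r)
    (hφ : φ ∈ Icc (π / 8) (5 * π / 24)) (hε : ε = 1 ∨ ε = -1) (hθφ : ε * sin θ = -cos (3 * φ))
    {t : ℝ → ℂ}
    (ht : ∀ ρ, t ρ = ε * Complex.exp (-Complex.I * (θ / 3)) * ((cbrtTwo * cos φ + ρ : ℝ) : ℂ)) :
    ‖∫ ρ in Ioi (0 : ℝ), Complex.exp ((r : ℂ) ^ ((4 : ℂ) / 3) * f θ (t ρ)
      - x * ((r : ℂ) * Complex.exp (Complex.I * θ)) ^ ((2 : ℂ) / 3) * t ρ ^ 2)‖ ≤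
      exp (4700 * ‖x‖ ^ 2) * exp (-1.38 * r ^ ((4 : ℝ) / 3)) := by
  refine norm_integral_Ioi_le_of_norm_le_mul_exp_neg fun ρ hρ ↦ ?_
  rw [Complex.norm_exp, ← exp_add, ← exp_add, exp_le_exp]
  linarith [re_tail_exponent_le x hr hφ hε hθφ (le_of_lt hρ) (ht ρ)]

/-- The contributions of the two infinite tails of the rotated real line are
uniformly exponentially small, of order `exp(−1.38·r^{4/3})`. -/
theorem pearcey_tails_exponentially_small (x : ℂ) :
    ∃ C : ℝ, 0 < C ∧ ∀ θ ∈ Set.Icc (-(π / 8)) (π / 8), ∀ r : ℝ, 1 ≤ r →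
      ‖∫ ρ in Set.Ioi (0 : ℝ),
          Complex.exp ((r : ℂ) ^ ((4 : ℂ) / 3) *
              f θ (W θ + (ρ : ℂ) * Complex.exp (-Complex.I * ((θ : ℂ) / 3)))
            - x * ((r : ℂ) * Complex.exp (Complex.I * (θ : ℂ))) ^ ((2 : ℂ) / 3) *
              (W θ + (ρ : ℂ) * Complex.exp (-Complex.I * ((θ : ℂ) / 3))) ^ 2)‖ ≤
        C * Real.exp (-1.38 * r ^ ((4 : ℝ) / 3)) ∧
      ‖∫ ρ in Set.Ioi (0 : ℝ),
          Complex.exp ((r : ℂ) ^ ((4 : ℂ) / 3) *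
              f θ (U θ - (ρ : ℂ) * Complex.exp (-Complex.I * ((θ : ℂ) / 3)))
            - x * ((r : ℂ) * Complex.exp (Complex.I * (θ : ℂ))) ^ ((2 : ℂ) / 3) *
              (U θ - (ρ : ℂ) * Complex.exp (-Complex.I * ((θ : ℂ) / 3))) ^ 2)‖ ≤
        C * Real.exp (-1.38 * r ^ ((4 : ℝ) / 3)) := by
  refine ⟨exp (4700 * ‖x‖ ^ 2), exp_pos _, fun θ ⟨hθ₁, hθ₂⟩ r hr ↦ ⟨?_, ?_⟩⟩
  · refine norm_tail_integral_le x (φ := π / 6 + θ / 3) (ε := 1) hr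
      ⟨by linarith, by linarith⟩ (Or.inl rfl) ?_ fun ρ ↦ ?_
    · rw [show 3 * (π / 6 + θ / 3) = θ + π / 2 by ring, cos_add_pi_div_two]; ring
    · rw [W_eq]; push_cast; ring
  · refine norm_tail_integral_le x (φ := π / 6 - θ / 3) (ε := -1) hr
      ⟨by linarith, by linarith⟩ (Or.inr rfl) ?_ fun ρ ↦ ?_
    · rw [show 3 * (π / 6 - θ / 3) = π / 2 - θ by ring, cos_pi_div_two_sub]; ring
    · rw [U_eq]; push_cast; ring
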